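/- Let α₁, α₂ > 0 and T₀ > 0, and define ℓ(x,u) = (α₁ g(x)ᵀH_x(x) − α₂ T₀ g(x)ᵀS_x(x))ᵀ u. Let x : [0, t_f] → 𝕏 be a continuously differentiable solution of the RIPHS state equation with continuous control u and x(0) = x⁰. Then the following integral identity holds: ∫₀^{t_f} ℓ(x(t), u(t)) dt = α₁ [H(x(t_f)) − H(x⁰)] + α₂ T₀ ( S(x⁰) − S(x(t_f)) + Σ_{k=1}^N ∫₀^{t_f} γ_k(x(t)) ({S,H}_{J_k}(x(t)))² dt ). -/

import Mathlib

open Set Matrix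

/-! Along a solution, skew-symmetry of `J₀` and of the `J_k` gives the power balance
`d/dt H(x) = (gᵀH_x)ᵀu`, while skew-symmetry together with the Casimir property
`J₀ S_x = 0` gives the entropy balance `d/dt S(x) = Σ_k γ_k {S,H}_{J_k}² + (gᵀS_x)ᵀu`:
the irreversible term `γ_k {S,H}_{J_k} J_k H_x` contributes `γ_k {S,H}_{J_k}²` to it.
Integrating both balances over `[0, t_f]` and combining them with weights `α₁` and `-α₂T₀`
gives the identity. -/

noncomputable def mv {a b : ℕ} (A : Matrix (Fin a) (Fin b) ℝ)
    (x : EuclideanSpace ℝ (Fin b)) : EuclideanSpace ℝ (Fin a) :=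
  Matrix.toEuclideanLin A x

/-- The Poisson bracket `{S,H}_J(x) = S_x(x)ᵀ J H_x(x)`, evaluated at given gradients. -/
noncomputable def bracket {n : ℕ} (J : Matrix (Fin n) (Fin n) ℝ)
    (Sx Hx : EuclideanSpace ℝ (Fin n)) : ℝ :=
  inner ℝ Sx (mv J Hx)

lemma mv_add {a b : ℕ} (A B : Matrix (Fin a) (Fin b) ℝ) (v : EuclideanSpace ℝ (Fin b)) :
    mv (A + B) v = mv A v + mv B v := by
  simp [mv]

lemma mv_neg {a b : ℕ} (A : Matrix (Fin a) (Fin b) ℝ) (v : EuclideanSpace ℝ (Fin b)) :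
    mv (-A) v = -mv A v := by
  simp [mv]

lemma mv_sum_smul {a b N : ℕ} (c : Fin N → ℝ) (A : Fin N → Matrix (Fin a) (Fin b) ℝ)
    (v : EuclideanSpace ℝ (Fin b)) : mv (∑ k, c k • A k) v = ∑ k, c k • mv (A k) v := by
  simp [mv]

lemma inner_mv {a b : ℕ} (A : Matrix (Fin a) (Fin b) ℝ) (w : EuclideanSpace ℝ (Fin a))
    (v : EuclideanSpace ℝ (Fin b)) :
    inner ℝ w (mv A v) = inner ℝ (mv Aᵀ w) v := by
  rw [mv, mv, ← conjTranspose_eq_transpose_of_trivial, toEuclideanLin_conjTranspose_eq_adjoint,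
    LinearMap.adjoint_inner_left]

lemma inner_mv_self_of_transpose_eq_neg {a : ℕ} {A : Matrix (Fin a) (Fin a) ℝ} (hA : Aᵀ = -A)
    (v : EuclideanSpace ℝ (Fin a)) : inner ℝ v (mv A v) = 0 := by
  have h := inner_mv A v v
  rw [hA, mv_neg, inner_neg_left, real_inner_comm] at h
  rw [real_inner_comm]
  linarith

lemma continuous_mv {a b : ℕ} :
    Continuous fun p : Matrix (Fin a) (Fin b) ℝ × EuclideanSpace ℝ (Fin b) => mv p.1 p.2 :=
  (PiLp.continuous_toLp 2 _).comp
    (continuous_fst.matrix_mulVec ((PiLp.continuous_ofLp 2 _).comp continuous_snd))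

lemma ContinuousOn.mv {α : Type*} [TopologicalSpace α] {s : Set α} {a b : ℕ}
    {A : α → Matrix (Fin a) (Fin b) ℝ} {v : α → EuclideanSpace ℝ (Fin b)}
    (hA : ContinuousOn A s) (hv : ContinuousOn v s) :
    ContinuousOn (fun t => mv (A t) (v t)) s :=
  continuous_mv.comp_continuousOn (f := fun t => (A t, v t)) (hA.prodMk hv)

lemma inner_mv_add_sum_smul {n N : ℕ} (A : Matrix (Fin n) (Fin n) ℝ) (c : Fin N → ℝ)
    (B : Fin N → Matrix (Fin n) (Fin n) ℝ) (w v : EuclideanSpace ℝ (Fin n)) :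
    inner ℝ w (mv (A + ∑ k, c k • B k) v)
      = inner ℝ w (mv A v) + ∑ k, c k * inner ℝ w (mv (B k) v) := by
  simp only [mv_add, mv_sum_smul, inner_add_right, inner_sum, inner_smul_right]

lemma riphs_power_balance {n m N : ℕ} {A : Matrix (Fin n) (Fin n) ℝ} (hA : Aᵀ = -A)
    {B : Fin N → Matrix (Fin n) (Fin n) ℝ} (hB : ∀ k, (B k)ᵀ = -B k) (c : Fin N → ℝ)
    (G : Matrix (Fin n) (Fin m) ℝ) (h : EuclideanSpace ℝ (Fin n))
    (w : EuclideanSpace ℝ (Fin m)) :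
    inner ℝ h (mv (A + ∑ k, c k • B k) h + mv G w) = inner ℝ (mv Gᵀ h) w := by
  simp only [inner_add_right, inner_mv_add_sum_smul, inner_mv_self_of_transpose_eq_neg hA,
    inner_mv_self_of_transpose_eq_neg (hB _), mul_zero, Finset.sum_const_zero, zero_add,
    inner_mv G]

lemma riphs_entropy_balance {n m N : ℕ} {A : Matrix (Fin n) (Fin n) ℝ} (hA : Aᵀ = -A)
    {s : EuclideanSpace ℝ (Fin n)} (hs : mv A s = 0) (γ : Fin N → ℝ)
    (B : Fin N → Matrix (Fin n) (Fin n) ℝ) (G : Matrix (Fin n) (Fin m) ℝ)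
    (h : EuclideanSpace ℝ (Fin n)) (w : EuclideanSpace ℝ (Fin m)) :
    inner ℝ s (mv (A + ∑ k, (γ k * bracket (B k) s h) • B k) h + mv G w)
      = ∑ k, γ k * bracket (B k) s h ^ 2 + inner ℝ (mv Gᵀ s) w := by
  have hcasimir : inner ℝ s (mv A h) = 0 := by
    rw [inner_mv, hA, mv_neg, hs, neg_zero, inner_zero_left]
  simp only [inner_add_right, inner_mv_add_sum_smul, hcasimir, inner_mv G, zero_add]
  congr 1
  exact Finset.sum_congr rfl fun k _ => by rw [bracket]; ring

lemma integral_eq_sub_of_hasGradientAt_comp {E : Type*} [NormedAddCommGroup E]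
    [InnerProductSpace ℝ E] [CompleteSpace E] {F : E → ℝ} {F' : E → E} {x x' : ℝ → E}
    {f : ℝ → ℝ} {a b : ℝ} (hab : a ≤ b)
    (hF : ∀ t ∈ Icc a b, HasGradientAt F (F' (x t)) (x t))
    (hx : ∀ t ∈ Icc a b, HasDerivWithinAt x (x' t) (Icc a b) t)
    (hf : ContinuousOn f (Icc a b)) (hfx : ∀ t ∈ Ioo a b, f t = inner ℝ (F' (x t)) (x' t)) :
    ∫ t in a..b, f t = F (x b) - F (x a) := by
  refine intervalIntegral.integral_eq_sub_of_hasDeriv_right_of_le hab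
    (fun t ht => (hF t ht).continuousAt.comp_continuousWithinAt (hx t ht).continuousWithinAt)
    (fun t ht => ?_) (hf.intervalIntegrable_of_Icc hab)
  have hxt := (hx t (Ioo_subset_Icc_self ht)).hasDerivAt (Icc_mem_nhds ht.1 ht.2)
  rw [hfx t ht]
  exact ((hF t (Ioo_subset_Icc_self ht)).hasFDerivAt.comp_hasDerivAt t hxt).hasDerivWithinAt

theorem integral_supply_identity_general
    (n N m : ℕ)
    (X : Set (EuclideanSpace ℝ (Fin n)))
    -- Poisson structure matrix field J₀ : continuous, skew-symmetric
    (J0 : EuclideanSpace ℝ (Fin n) → Matrix (Fin n) (Fin n) ℝ)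
    (hJ0skew : ∀ p ∈ X, (J0 p)ᵀ = -(J0 p))
    -- Hamiltonian H, differentiable with continuous gradient Hx
    (H : EuclideanSpace ℝ (Fin n) → ℝ)
    (Hx : EuclideanSpace ℝ (Fin n) → EuclideanSpace ℝ (Fin n))
    (hH : ∀ p ∈ X, HasGradientAt H (Hx p) p)
    (hHxcont : ContinuousOn Hx X)
    -- entropy S, differentiable with continuous gradient Sx, Casimir of J₀
    (S : EuclideanSpace ℝ (Fin n) → ℝ)
    (Sx : EuclideanSpace ℝ (Fin n) → EuclideanSpace ℝ (Fin n))
    (hS : ∀ p ∈ X, HasGradientAt S (Sx p) p)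
    (hSxcont : ContinuousOn Sx X)
    (hCasimir : ∀ p ∈ X, mv (J0 p) (Sx p) = 0)
    -- constant skew-symmetric structure matrices J₁,…,J_N
    (J : Fin N → Matrix (Fin n) (Fin n) ℝ)
    (hJskew : ∀ k, (J k)ᵀ = -(J k))
    -- positive continuous functions γ_k
    (γ : Fin N → EuclideanSpace ℝ (Fin n) → ℝ)
    (hγcont : ∀ k, ContinuousOn (γ k) X)
    -- continuous input matrix g
    (g : EuclideanSpace ℝ (Fin n) → Matrix (Fin n) (Fin m) ℝ)
    (hgcont : ContinuousOn g X)
    (α₁ α₂ T₀ : ℝ)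
    -- a continuously differentiable solution x on [0, t_f] with continuous control u
    (tf : ℝ) (htf : 0 ≤ tf)
    (x : ℝ → EuclideanSpace ℝ (Fin n))
    (u : ℝ → EuclideanSpace ℝ (Fin m))
    (hu : ContinuousOn u (Icc 0 tf))
    (hxmem : ∀ t ∈ Icc 0 tf, x t ∈ X)
    (x' : ℝ → EuclideanSpace ℝ (Fin n))
    (hxdiff : ∀ t ∈ Icc 0 tf, HasDerivWithinAt x (x' t) (Icc 0 tf) t)
    -- the RIPHS state equation
    (hdyn : ∀ t ∈ Icc 0 tf,
      x' t =
        mv (J0 (x t) + ∑ k, (γ k (x t) * bracket (J k) (Sx (x t)) (Hx (x t))) • J k)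
           (Hx (x t))
        + mv (g (x t)) (u t)) :
    -- the integral identity
    ∫ t in (0:ℝ)..tf,
        (inner ℝ (α₁ • mv (g (x t))ᵀ (Hx (x t)) - (α₂ * T₀) • mv (g (x t))ᵀ (Sx (x t)))
          (u t) : ℝ)
      = α₁ * (H (x tf) - H (x 0))
        + α₂ * T₀ * (S (x 0) - S (x tf)
            + ∑ k, ∫ t in (0:ℝ)..tf,
                γ k (x t) * (bracket (J k) (Sx (x t)) (Hx (x t)))^2) := by
  have hx : ContinuousOn x (Icc 0 tf) := fun t ht => (hxdiff t ht).continuousWithinAt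
  have hgT : ContinuousOn (fun t => (g (x t))ᵀ) (Icc 0 tf) :=
    continuous_id.matrix_transpose.comp_continuousOn (hgcont.comp hx hxmem)
  have hHx : ContinuousOn (fun t => Hx (x t)) (Icc 0 tf) := hHxcont.comp hx hxmem
  have hSx : ContinuousOn (fun t => Sx (x t)) (Icc 0 tf) := hSxcont.comp hx hxmem
  have hyH : ContinuousOn (fun t => inner ℝ (mv (g (x t))ᵀ (Hx (x t))) (u t)) (Icc 0 tf) :=
    (hgT.mv hHx).inner hu
  have hyS : ContinuousOn (fun t => inner ℝ (mv (g (x t))ᵀ (Sx (x t))) (u t)) (Icc 0 tf) :=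
    (hgT.mv hSx).inner hu
  have hdiss : ∀ k, ContinuousOn
      (fun t => γ k (x t) * bracket (J k) (Sx (x t)) (Hx (x t)) ^ 2) (Icc 0 tf) :=
    fun k => ((hγcont k).comp hx hxmem).mul ((hSx.inner (continuousOn_const.mv hHx)).pow 2)
  have hdissSum : ContinuousOn
      (fun t => ∑ k, γ k (x t) * bracket (J k) (Sx (x t)) (Hx (x t)) ^ 2) (Icc 0 tf) :=
    continuousOn_finsetSum _ fun k _ => hdiss k
  have energy : ∫ t in (0:ℝ)..tf, inner ℝ (mv (g (x t))ᵀ (Hx (x t))) (u t)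
      = H (x tf) - H (x 0) :=
    integral_eq_sub_of_hasGradientAt_comp htf (fun t ht => hH _ (hxmem t ht)) hxdiff hyH
      fun t ht => by
        have ht' := Ioo_subset_Icc_self ht
        rw [hdyn t ht', riphs_power_balance (hJ0skew _ (hxmem t ht')) hJskew]
  have entropy : ∫ t in (0:ℝ)..tf, (∑ k, γ k (x t) * bracket (J k) (Sx (x t)) (Hx (x t)) ^ 2
      + inner ℝ (mv (g (x t))ᵀ (Sx (x t))) (u t)) = S (x tf) - S (x 0) :=
    integral_eq_sub_of_hasGradientAt_comp htf (fun t ht => hS _ (hxmem t ht)) hxdiff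
      (hdissSum.add hyS) fun t ht => by
        have hxt := hxmem t (Ioo_subset_Icc_self ht)
        rw [hdyn t (Ioo_subset_Icc_self ht), riphs_entropy_balance (hJ0skew _ hxt) (hCasimir _ hxt)]
  have hint {f : ℝ → ℝ} (hf : ContinuousOn f (Icc 0 tf)) :
      IntervalIntegrable f MeasureTheory.volume 0 tf :=
    hf.intervalIntegrable_of_Icc htf
  rw [intervalIntegral.integral_add (hint hdissSum) (hint hyS),
    intervalIntegral.integral_finsetSum fun k _ => hint (hdiss k)] at entropy
  simp only [inner_sub_left, real_inner_smul_left]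
  rw [intervalIntegral.integral_sub (hint (hyH.const_mul α₁))
      (hint (hyS.const_mul (α₂ * T₀))),
    intervalIntegral.integral_const_mul, intervalIntegral.integral_const_mul]
  linear_combination α₁ * energy - α₂ * T₀ * entropy

/-- Integral identity for the supply-rate stage cost
`ℓ(x,u) = (α₁ y_H − α₂T₀ y_S)ᵀ u` along solutions of a RIPHS:
`∫₀^{t_f} ℓ = α₁[H(x(t_f)) − H(x⁰)] + α₂T₀ (S(x⁰) − S(x(t_f)) + Σ_k ∫₀^{t_f} γ_k {S,H}²_{J_k})`. -/
theorem integral_supply_identity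
    (n N m : ℕ)
    (X : Set (EuclideanSpace ℝ (Fin n))) (hXopen : IsOpen X)
    -- Poisson structure matrix field J₀ : continuous, skew-symmetric
    (J0 : EuclideanSpace ℝ (Fin n) → Matrix (Fin n) (Fin n) ℝ)
    (hJ0cont : ContinuousOn J0 X)
    (hJ0skew : ∀ p ∈ X, (J0 p)ᵀ = -(J0 p))
    -- Hamiltonian H, differentiable with continuous gradient Hx
    (H : EuclideanSpace ℝ (Fin n) → ℝ)
    (Hx : EuclideanSpace ℝ (Fin n) → EuclideanSpace ℝ (Fin n))
    (hH : ∀ p ∈ X, HasGradientAt H (Hx p) p)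
    (hHxcont : ContinuousOn Hx X)
    -- entropy S, differentiable with continuous gradient Sx, Casimir of J₀
    (S : EuclideanSpace ℝ (Fin n) → ℝ)
    (Sx : EuclideanSpace ℝ (Fin n) → EuclideanSpace ℝ (Fin n))
    (hS : ∀ p ∈ X, HasGradientAt S (Sx p) p)
    (hSxcont : ContinuousOn Sx X)
    (hCasimir : ∀ p ∈ X, mv (J0 p) (Sx p) = 0)
    -- constant skew-symmetric structure matrices J₁,…,J_N
    (J : Fin N → Matrix (Fin n) (Fin n) ℝ)
    (hJskew : ∀ k, (J k)ᵀ = -(J k))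
    -- positive continuous functions γ_k
    (γ : Fin N → EuclideanSpace ℝ (Fin n) → ℝ)
    (hγpos : ∀ k, ∀ p ∈ X, 0 < γ k p)
    (hγcont : ∀ k, ContinuousOn (γ k) X)
    -- continuous input matrix g
    (g : EuclideanSpace ℝ (Fin n) → Matrix (Fin n) (Fin m) ℝ)
    (hgcont : ContinuousOn g X)
    (α₁ α₂ T₀ : ℝ) (hα₁ : 0 < α₁) (hα₂ : 0 < α₂) (hT₀ : 0 < T₀)
    -- a continuously differentiable solution x on [0, t_f] with continuous control u
    (tf : ℝ) (htf : 0 ≤ tf)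
    (x : ℝ → EuclideanSpace ℝ (Fin n))
    (u : ℝ → EuclideanSpace ℝ (Fin m))
    (hu : ContinuousOn u (Icc 0 tf))
    (hxmem : ∀ t ∈ Icc 0 tf, x t ∈ X)
    (x' : ℝ → EuclideanSpace ℝ (Fin n))
    (hx'cont : ContinuousOn x' (Icc 0 tf))
    (hxdiff : ∀ t ∈ Icc 0 tf, HasDerivWithinAt x (x' t) (Icc 0 tf) t)
    -- the RIPHS state equation
    (hdyn : ∀ t ∈ Icc 0 tf,
      x' t =
        mv (J0 (x t) + ∑ k, (γ k (x t) * bracket (J k) (Sx (x t)) (Hx (x t))) • J k)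
           (Hx (x t))
        + mv (g (x t)) (u t)) :
    -- the integral identity
    ∫ t in (0:ℝ)..tf,
        (inner ℝ (α₁ • mv (g (x t))ᵀ (Hx (x t)) - (α₂ * T₀) • mv (g (x t))ᵀ (Sx (x t)))
          (u t) : ℝ)
      = α₁ * (H (x tf) - H (x 0))
        + α₂ * T₀ * (S (x 0) - S (x tf)
            + ∑ k, ∫ t in (0:ℝ)..tf,
                γ k (x t) * (bracket (J k) (Sx (x t)) (Hx (x t)))^2) :=
  integral_supply_identity_general n N m X J0 hJ0skew H Hx hH hHxcont S Sx hS hSxcont hCasimir J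
    hJskew γ hγcont g hgcont α₁ α₂ T₀ tf htf x u hu hxmem x' hxdiff hdyn
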